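/- Let S and A be nonempty finite sets, R : S × A → ℝ, and p : S × A × S → ℝ with p(s' | s, a) ≥ 0 and Σ_{s'∈S} p(s' | s, a) = 1 for all (s, a). Let 0 ≤ γ < 1 and ω > 0, and define the MellowMax Bellman operator T_mm on functions Q : S × A → ℝ by (T_mm Q)(s, a) = R(s, a) + γ·Σ_{s'∈S} p(s' | s, a)·mm_ω(Q(s', ·)), where mm_ω acts on the vector (Q(s', a'))_{a'∈A}. Then for all Q, Q' : S × A → ℝ, max_{(s,a)} |(T_mm Q)(s, a) − (T_mm Q')(s, a)| ≤ γ·max_{(s,a)} |Q(s, a) − Q'(s, a)|, i.e., T_mm is a γ-contraction in the sup norm. -/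

import Mathlib

/-!
MellowMax commutes with adding a constant and is monotone, so it is nonexpansive in the sup
norm. The Bellman operator averages these nonexpansive maps with the probability weights
`p(· | s, a)` and scales by `γ`, hence contracts by `γ`.
-/

/-- The MellowMax operator over a finite index type `ι`:
`mm_ω(f) = (1/ω) log((1/|ι|) ∑ᵢ exp(ω f i))`. -/
noncomputable def mellowMax {ι : Type*} [Fintype ι] (ω : ℝ) (f : ι → ℝ) : ℝ :=
  (1 / ω) * Real.log ((1 / (Fintype.card ι : ℝ)) * ∑ i, Real.exp (ω * f i))

/-- The MellowMax Bellman operator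
`(T_mm Q)(s,a) = R(s,a) + γ ∑_{s'} p(s'|s,a) mm_ω(Q(s',·))`. -/
noncomputable def mmBellman {S A : Type*} [Fintype S] [Fintype A]
    (R : S × A → ℝ) (p : S × A → S → ℝ) (γ ω : ℝ)
    (Q : S × A → ℝ) : S × A → ℝ :=
  fun sa => R sa + γ * ∑ s' : S, p sa s' * mellowMax ω (fun a' => Q (s', a'))

open Finset

section MellowMax

variable {ι : Type*} [Fintype ι] [Nonempty ι]

theorem mellowMax_add_const {ω : ℝ} (hω : ω ≠ 0) (f : ι → ℝ) (c : ℝ) :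
    mellowMax ω (fun i => f i + c) = mellowMax ω f + c := by
  have hpos : 0 < (1 / (Fintype.card ι : ℝ)) * ∑ i, Real.exp (ω * f i) := by positivity
  have hshift :
      ∑ i, Real.exp (ω * (f i + c)) = Real.exp (ω * c) * ∑ i, Real.exp (ω * f i) := by
    rw [mul_sum]
    exact sum_congr rfl fun i _ => by rw [← Real.exp_add]; ring_nf
  unfold mellowMax
  rw [hshift, mul_left_comm, Real.log_mul (Real.exp_ne_zero _) hpos.ne', Real.log_exp]
  field_simp
  ring

theorem mellowMax_mono {ω : ℝ} (hω : 0 < ω) {f g : ι → ℝ} (h : f ≤ g) :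
    mellowMax ω f ≤ mellowMax ω g := by
  unfold mellowMax
  gcongr
  exact h _

theorem mellowMax_le_add_of_le {ω : ℝ} (hω : 0 < ω) {f g : ι → ℝ} {c : ℝ}
    (h : ∀ i, f i ≤ g i + c) : mellowMax ω f ≤ mellowMax ω g + c :=
  mellowMax_add_const hω.ne' g c ▸ mellowMax_mono hω h

theorem abs_mellowMax_sub_le {ω : ℝ} (hω : 0 < ω) {f g : ι → ℝ} {c : ℝ}
    (h : ∀ i, |f i - g i| ≤ c) : |mellowMax ω f - mellowMax ω g| ≤ c := by
  rw [abs_sub_le_iff, sub_le_iff_le_add', sub_le_iff_le_add']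
  exact ⟨mellowMax_le_add_of_le hω fun i => sub_le_iff_le_add'.1 (abs_sub_le_iff.1 (h i)).1,
    mellowMax_le_add_of_le hω fun i => sub_le_iff_le_add'.1 (abs_sub_le_iff.1 (h i)).2⟩

end MellowMax

theorem abs_sum_mul_le_of_stochastic {ι : Type*} {s : Finset ι} {p x : ι → ℝ} {M : ℝ}
    (hp0 : ∀ i ∈ s, 0 ≤ p i) (hp1 : ∑ i ∈ s, p i = 1) (hx : ∀ i ∈ s, |x i| ≤ M) :
    |∑ i ∈ s, p i * x i| ≤ M :=
  calc |∑ i ∈ s, p i * x i|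
      ≤ ∑ i ∈ s, |p i * x i| := abs_sum_le_sum_abs _ _
    _ ≤ ∑ i ∈ s, p i * M := sum_le_sum fun i hi => by
        rw [abs_mul, abs_of_nonneg (hp0 i hi)]
        exact mul_le_mul_of_nonneg_left (hx i hi) (hp0 i hi)
    _ = M := by rw [← sum_mul, hp1, one_mul]

section Bellman

variable {S A : Type*} [Fintype S] [Fintype A]

theorem mmBellman_sub (R : S × A → ℝ) (p : S × A → S → ℝ) (γ ω : ℝ) (Q Q' : S × A → ℝ)
    (sa : S × A) :
    mmBellman R p γ ω Q sa - mmBellman R p γ ω Q' sa =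
      γ * ∑ s', p sa s' *
        (mellowMax ω (fun a => Q (s', a)) - mellowMax ω (fun a => Q' (s', a))) := by
  simp only [mmBellman, mul_sub, sum_sub_distrib]
  ring

theorem abs_mmBellman_sub_le [Nonempty A] {R : S × A → ℝ} {p : S × A → S → ℝ}
    (hp0 : ∀ sa s', 0 ≤ p sa s') (hp1 : ∀ sa, ∑ s', p sa s' = 1) {γ ω : ℝ} (hγ : 0 ≤ γ)
    (hω : 0 < ω) {Q Q' : S × A → ℝ} {M : ℝ} (hM : ∀ sa, |Q sa - Q' sa| ≤ M) (sa : S × A) :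
    |mmBellman R p γ ω Q sa - mmBellman R p γ ω Q' sa| ≤ γ * M := by
  rw [mmBellman_sub, abs_mul, abs_of_nonneg hγ]
  gcongr
  exact abs_sum_mul_le_of_stochastic (fun s' _ => hp0 sa s') (hp1 sa)
    fun s' _ => abs_mellowMax_sub_le hω fun a => hM (s', a)

end Bellman

theorem stmt_8_general {S A : Type*} [Fintype S] [Fintype A] [Nonempty S] [Nonempty A]
    (R : S × A → ℝ) (p : S × A → S → ℝ)
    (hp0 : ∀ (sa : S × A) (s' : S), 0 ≤ p sa s')
    (hp1 : ∀ sa : S × A, ∑ s' : S, p sa s' = 1)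
    (γ : ℝ) (hγ0 : 0 ≤ γ) (ω : ℝ) (hω : 0 < ω)
    (Q Q' : S × A → ℝ) :
    (Finset.univ.sup' Finset.univ_nonempty
        fun sa : S × A => |mmBellman R p γ ω Q sa - mmBellman R p γ ω Q' sa|) ≤
      γ * Finset.univ.sup' Finset.univ_nonempty
        fun sa : S × A => |Q sa - Q' sa| :=
  sup'_le _ _ fun sa _ => abs_mmBellman_sub_le hp0 hp1 hγ0 hω
    (fun sa' => le_sup' (fun sa => |Q sa - Q' sa|) (mem_univ sa')) sa

/-- **T_mm is a γ-contraction in the sup norm**: for a finite MDP with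
transition probabilities `p` and discount `0 ≤ γ < 1`,
`max_{(s,a)} |(T_mm Q)(s,a) - (T_mm Q')(s,a)| ≤ γ max_{(s,a)} |Q(s,a) - Q'(s,a)|`. -/
theorem stmt_8 {S A : Type*} [Fintype S] [Fintype A] [Nonempty S] [Nonempty A]
    (R : S × A → ℝ) (p : S × A → S → ℝ)
    (hp0 : ∀ (sa : S × A) (s' : S), 0 ≤ p sa s')
    (hp1 : ∀ sa : S × A, ∑ s' : S, p sa s' = 1)
    (γ : ℝ) (hγ0 : 0 ≤ γ) (hγ1 : γ < 1) (ω : ℝ) (hω : 0 < ω)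
    (Q Q' : S × A → ℝ) :
    (Finset.univ.sup' Finset.univ_nonempty
        fun sa : S × A => |mmBellman R p γ ω Q sa - mmBellman R p γ ω Q' sa|) ≤
      γ * Finset.univ.sup' Finset.univ_nonempty
        fun sa : S × A => |Q sa - Q' sa| :=
  stmt_8_general R p hp0 hp1 γ hγ0 ω hω Q Q'
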